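/- If the boundary of a bounded, open, connected, simply connected set D in the plane is covered by the union of two closed disks whose union is connected, then D itself is contained in the union of the two disks. -/

import Mathlib

open Metric Set Bornology

/-!
The union `K` of two closed disks through a common point `p` is star-shaped about `p`. Hence for
`x ∈ D \ K` the ray from `p` beyond `x` avoids `K`, and so avoids `frontier D`. Being connected
and meeting `D` at `x`, the ray lies in `D`, which is impossible since `D` is bounded.
-/

theorem IsPreconnected.subset_of_disjoint_frontier {X : Type*} [TopologicalSpace X]
    {S D : Set X} (hS : IsPreconnected S) (hSD : (S ∩ D).Nonempty)
    (hfr : Disjoint S (frontier D)) : S ⊆ D := by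
  have hcover : S ⊆ interior D ∪ (closure D)ᶜ := fun x hxS => by
    by_cases hx : x ∈ closure D
    · exact Or.inl (not_not.1 fun hx' => hfr.notMem_of_mem_left hxS ⟨hx, hx'⟩)
    · exact Or.inr hx
  obtain ⟨x, hxS, hxD⟩ := hSD
  have hx : x ∈ interior D := (hcover hxS).resolve_right (not_not.2 (subset_closure hxD))
  have hdisj : Disjoint (interior D) (closure D)ᶜ :=
    disjoint_compl_right.mono_left interior_subset_closure
  exact (hS.subset_left_of_subset_union isOpen_interior isClosed_closure.isOpen_compl hdisj
    hcover ⟨x, hxS, hx⟩).trans interior_subset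

section Ray

variable {E : Type*} [NormedAddCommGroup E] [NormedSpace ℝ E]

def rayBeyond (p z : E) : Set E := (fun t : ℝ => p + t • (z - p)) '' Ici 1

theorem mem_rayBeyond_self (p z : E) : z ∈ rayBeyond p z :=
  ⟨1, self_mem_Ici, by simp⟩

theorem isPreconnected_rayBeyond (p z : E) : IsPreconnected (rayBeyond p z) :=
  isPreconnected_Ici.image _ (by fun_prop)

theorem not_isBounded_rayBeyond {p z : E} (hz : z ≠ p) : ¬IsBounded (rayBeyond p z) := by
  intro hbdd
  obtain ⟨r, hr⟩ := hbdd.subset_closedBall p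
  have hzp : 0 < ‖z - p‖ := norm_pos_iff.2 (sub_ne_zero.2 hz)
  set t := max 1 ((r + 1) / ‖z - p‖)
  have ht : 0 ≤ t := zero_le_one.trans (le_max_left _ _)
  have hmem := hr ⟨t, mem_Ici.2 (le_max_left _ _), rfl⟩
  rw [mem_closedBall, dist_eq_norm, add_sub_cancel_left, norm_smul, Real.norm_of_nonneg ht]
    at hmem
  have hfar : r + 1 ≤ t * ‖z - p‖ := by
    calc r + 1 = (r + 1) / ‖z - p‖ * ‖z - p‖ := (div_mul_cancel₀ _ hzp.ne').symm
      _ ≤ t * ‖z - p‖ := mul_le_mul_of_nonneg_right (le_max_right _ _) hzp.le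
  linarith

theorem StarConvex.rayBeyond_subset_compl {p z : E} {K : Set E} (hK : StarConvex ℝ p K)
    (hz : z ∉ K) : rayBeyond p z ⊆ Kᶜ := by
  rintro _ ⟨t, ht, rfl⟩ hmem
  have ht0 : 0 < t := zero_lt_one.trans_le ht
  apply hz
  simpa [smul_smul, inv_mul_cancel₀ ht0.ne'] using
    hK.add_smul_sub_mem hmem (inv_nonneg.2 ht0.le) (inv_le_one_of_one_le₀ ht)

theorem Bornology.IsBounded.subset_of_frontier_subset_starConvex {D K : Set E} {p : E}
    (hD : IsBounded D) (hK : StarConvex ℝ p K) (hp : p ∈ K) (hfr : frontier D ⊆ K) :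
    D ⊆ K := by
  intro x hxD
  by_contra hxK
  have hray : rayBeyond p x ⊆ D :=
    (isPreconnected_rayBeyond p x).subset_of_disjoint_frontier ⟨x, mem_rayBeyond_self p x, hxD⟩
      (disjoint_compl_left.mono (hK.rayBeyond_subset_compl hxK) hfr)
  exact not_isBounded_rayBeyond (ne_of_mem_of_not_mem hp hxK).symm (hD.subset hray)

end Ray

theorem boundary_in_two_disks_implies_set_in_two_disks_general
    (D : Set ℂ)
    (hbdd : Bornology.IsBounded D)
    (c₁ c₂ : ℂ) (r₁ r₂ : ℝ)
    (hmeet : (closedBall c₁ r₁ ∩ closedBall c₂ r₂).Nonempty)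
    (hfr : frontier D ⊆ closedBall c₁ r₁ ∪ closedBall c₂ r₂) :
    D ⊆ closedBall c₁ r₁ ∪ closedBall c₂ r₂ := by
  obtain ⟨p, hp₁, hp₂⟩ := hmeet
  have hK : StarConvex ℝ p (closedBall c₁ r₁ ∪ closedBall c₂ r₂) :=
    ((convex_closedBall c₁ r₁).starConvex hp₁).union ((convex_closedBall c₂ r₂).starConvex hp₂)
  exact hbdd.subset_of_frontier_subset_starConvex hK (Or.inl hp₁) hfr

/-- If the boundary of a bounded, open, connected, simply connected set `D` in the plane
is covered by the union of two closed disks whose union is connected (the disks meet),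
then `D` itself is contained in the union of the two disks. -/
theorem boundary_in_two_disks_implies_set_in_two_disks
    (D : Set ℂ) (hD : D.Nonempty) (hopen : IsOpen D)
    (hbdd : Bornology.IsBounded D) (hconn : IsConnected D)
    (hsc : SimplyConnectedSpace ↥D)
    (c₁ c₂ : ℂ) (r₁ r₂ : ℝ)
    (hmeet : (closedBall c₁ r₁ ∩ closedBall c₂ r₂).Nonempty)
    (hfr : frontier D ⊆ closedBall c₁ r₁ ∪ closedBall c₂ r₂) :
    D ⊆ closedBall c₁ r₁ ∪ closedBall c₂ r₂ :=
  boundary_in_two_disks_implies_set_in_two_disks_general D hbdd c₁ c₂ r₁ r₂ hmeet hfr
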